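/- arXiv:1812.04222 — 2 statements merged into one kernel-verified Lean document; each statement's English description precedes it below -/
import Mathlib

section
/- (ℓ¹-almost invariance of Følner sets under the fusion random walk; scalar form of the key Rohlin-tower estimate.) Let (I, 1, ‾, d, N) be a fusion datum, let δ > 0, and let F, K ⊆ I be finite subsets such that F̄ = F and K is (F,δ)-invariant. Then Σ_{X∈F} d(X)² · Σ_{Z∈I} | Σ_{Y∈K} d(Y)² p_X(Y,Z) − 1_K(Z) · d(Z)² | ≤ 2δ · |F|_σ · |K|_σ, where 1_K is the indicator function of K and, for each fixed X, the sum over Z has only finitely many nonzero terms (it is supported on (F·K) ∪ K). -/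
open scoped BigOperators

/-- A fusion datum, modelling `Irr(C)` of a rigid C*-tensor category together with
its fusion rule. -/
structure FusionDatum where
  /-- the countable index set of simple objects -/
  I : Type
  countable : Countable I
  /-- the unit object -/
  one : I
  /-- conjugation -/
  conj : I → I
  /-- intrinsic dimension -/
  d : I → ℝ
  /-- fusion multiplicities -/
  N : I → I → I → ℕ
  conj_conj : ∀ X, conj (conj X) = X
  conj_one : conj one = one
  one_le_d : ∀ X, 1 ≤ d X
  d_conj : ∀ X, d (conj X) = d X
  N_one_left_self : ∀ Y, N one Y Y = 1
  N_one_left_ne : ∀ Y Z, Y ≠ Z → N one Y Z = 0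
  N_one_right_self : ∀ Y, N Y one Y = 1
  N_one_right_ne : ∀ Y Z, Y ≠ Z → N Y one Z = 0
  mul_support_finite : ∀ X Y, {Z | N X Y Z ≠ 0}.Finite
  dim_rule : ∀ X Y, ∑ᶠ Z, (N X Y Z : ℝ) * d Z = d X * d Y
  frobenius_left : ∀ X Y Z, N X Y Z = N (conj X) Z Y
  frobenius_right : ∀ X Y Z, N X Y Z = N Z (conj Y) X
  assoc : ∀ X Y V Z, ∑ᶠ W, N X Y W * N W V Z = ∑ᶠ U, N Y V U * N X U Z

namespace FusionDatum

variable (𝕀 : FusionDatum)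

/-- transition probability of the fusion random walk -/
noncomputable def p (X Y Z : 𝕀.I) : ℝ :=
  𝕀.d Z * (𝕀.N X Y Z : ℝ) / (𝕀.d X * 𝕀.d Y)

/-- the weighted measure `|F|_σ = Σ_{X∈F} d(X)²` -/
noncomputable def sigma (S : Set 𝕀.I) : ℝ := ∑ᶠ X ∈ S, 𝕀.d X ^ 2

/-- the product set `F·K` -/
def mulSet (F K : Set 𝕀.I) : Set 𝕀.I := {Z | ∃ X ∈ F, ∃ Y ∈ K, 𝕀.N X Y Z ≠ 0}

/-- `F̄ = {X̄ : X ∈ F}` -/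
def conjSet (F : Set 𝕀.I) : Set 𝕀.I := (fun X => 𝕀.conj X) '' F

/-- `K` is `(F,δ)`-invariant when `|(F·K) △ K|_σ ≤ δ·|K|_σ`. -/
def IsInvariant (F K : Set 𝕀.I) (δ : ℝ) : Prop :=
  𝕀.sigma (symmDiff (𝕀.mulSet F K) K) ≤ δ * 𝕀.sigma K

end FusionDatum

/-!
Fix `X ∈ F` and let `μ(Z) = Σ_{Y∈K} d(Y)² p_X(Y,Z)`. By the dimension rule `μ` has total mass
`|K|_σ`, and by Frobenius reciprocity together with the dimension rule for `X̄ ⊗ Z` it satisfies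
`μ(Z) ≤ d(Z)²`. Comparing with the measure `1_K d²` of the same total mass, the `ℓ¹`-distance is
twice the mass `μ` puts outside `K`, hence at most `2 |X·K \ K|_σ ≤ 2 |(F·K) △ K|_σ ≤ 2δ |K|_σ`.
-/

theorem Finset.sum_abs_sub_indicator_eq {α : Type*} [DecidableEq α] {s t : Finset α}
    {f g : α → ℝ} (hts : t ⊆ s) (hf : ∀ z ∈ s \ t, 0 ≤ f z) (hfg : ∀ z ∈ t, f z ≤ g z)
    (hsum : ∑ z ∈ s, f z = ∑ z ∈ t, g z) :
    ∑ z ∈ s, |f z - (t : Set α).indicator g z| = 2 * ∑ z ∈ s \ t, f z := by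
  have houtside : ∑ z ∈ s \ t, |f z - (t : Set α).indicator g z| = ∑ z ∈ s \ t, f z :=
    Finset.sum_congr rfl fun z hz => by
      rw [Set.indicator_of_notMem (by simpa using (Finset.mem_sdiff.1 hz).2), sub_zero,
        abs_of_nonneg (hf z hz)]
  have hinside : ∑ z ∈ t, |f z - (t : Set α).indicator g z| = ∑ z ∈ t, (g z - f z) :=
    Finset.sum_congr rfl fun z hz => by
      rw [Set.indicator_of_mem (by simpa using hz), abs_sub_comm,
        abs_of_nonneg (sub_nonneg.2 (hfg z hz))]
  have hsplit := Finset.sum_sdiff hts (f := f)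
  rw [← Finset.sum_sdiff hts, houtside, hinside, Finset.sum_sub_distrib]
  linarith

namespace FusionDatum

open scoped Classical

variable (𝕀 : FusionDatum)

lemma d_pos (X : 𝕀.I) : 0 < 𝕀.d X := one_pos.trans_le (𝕀.one_le_d X)

lemma sigma_coe (s : Finset 𝕀.I) : 𝕀.sigma s = ∑ X ∈ s, 𝕀.d X ^ 2 :=
  finsum_mem_coe_finset _ _

lemma sum_N_mul_d_eq (X Y : 𝕀.I) {s : Finset 𝕀.I} (hs : ∀ Z, 𝕀.N X Y Z ≠ 0 → Z ∈ s) :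
    ∑ Z ∈ s, (𝕀.N X Y Z : ℝ) * 𝕀.d Z = 𝕀.d X * 𝕀.d Y := by
  rw [← 𝕀.dim_rule X Y]
  refine (finsum_eq_sum_of_support_subset _ fun Z hZ => hs Z ?_).symm
  intro h
  simp [h] at hZ

lemma sum_N_mul_d_le (X Y : 𝕀.I) (s : Finset 𝕀.I) :
    ∑ Z ∈ s, (𝕀.N X Y Z : ℝ) * 𝕀.d Z ≤ 𝕀.d X * 𝕀.d Y := by
  let hsupp := 𝕀.mul_support_finite X Y
  rw [← 𝕀.sum_N_mul_d_eq X Y (s := s ∪ hsupp.toFinset) fun Z hZ =>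
    Finset.mem_union_right _ (hsupp.mem_toFinset.2 hZ)]
  exact Finset.sum_le_sum_of_subset_of_nonneg Finset.subset_union_left fun Z _ _ =>
    mul_nonneg (Nat.cast_nonneg _) (𝕀.d_pos Z).le

lemma d_sq_mul_p (X Y Z : 𝕀.I) :
    𝕀.d Y ^ 2 * 𝕀.p X Y Z = 𝕀.d Z / 𝕀.d X * ((𝕀.N X Y Z : ℝ) * 𝕀.d Y) := by
  have := (𝕀.d_pos X).ne'
  have := (𝕀.d_pos Y).ne'
  rw [p]
  field_simp

noncomputable def mulFinset (F K : Finset 𝕀.I) : Finset 𝕀.I :=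
  F.biUnion fun X => K.biUnion fun Y => (𝕀.mul_support_finite X Y).toFinset

variable {𝕀}

lemma mem_mulFinset {F K : Finset 𝕀.I} {Z : 𝕀.I} :
    Z ∈ 𝕀.mulFinset F K ↔ ∃ X ∈ F, ∃ Y ∈ K, 𝕀.N X Y Z ≠ 0 := by
  simp [mulFinset]

lemma coe_mulFinset (F K : Finset 𝕀.I) : (𝕀.mulFinset F K : Set 𝕀.I) = 𝕀.mulSet F K := by
  ext Z
  simp [mem_mulFinset, mulSet]

lemma mulFinset_singleton_sdiff_subset_symmDiff {F : Finset 𝕀.I} {X : 𝕀.I} (hX : X ∈ F)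
    (K : Finset 𝕀.I) : 𝕀.mulFinset {X} K \ K ⊆ symmDiff (𝕀.mulFinset F K) K := by
  rw [symmDiff_def]
  refine (Finset.sdiff_subset_sdiff ?_ le_rfl).trans le_sup_left
  exact Finset.biUnion_subset_biUnion_of_subset_left _ (Finset.singleton_subset_iff.2 hX)

/-- The `σ`-weight of `K` after one step of the fusion random walk by `X`. -/
noncomputable def stepMass (K : Finset 𝕀.I) (X Z : 𝕀.I) : ℝ :=
  ∑ Y ∈ K, 𝕀.d Y ^ 2 * 𝕀.p X Y Z

lemma stepMass_eq (K : Finset 𝕀.I) (X Z : 𝕀.I) :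
    𝕀.stepMass K X Z = 𝕀.d Z / 𝕀.d X * ∑ Y ∈ K, (𝕀.N X Y Z : ℝ) * 𝕀.d Y := by
  simp only [stepMass, d_sq_mul_p, Finset.mul_sum]

lemma stepMass_nonneg (K : Finset 𝕀.I) (X Z : 𝕀.I) : 0 ≤ 𝕀.stepMass K X Z := by
  rw [stepMass_eq]
  exact mul_nonneg (div_nonneg (𝕀.d_pos Z).le (𝕀.d_pos X).le)
    (Finset.sum_nonneg fun Y _ => mul_nonneg (Nat.cast_nonneg _) (𝕀.d_pos Y).le)

/-- By Frobenius reciprocity `N_{X,Y}^Z = N_{X̄,Z}^Y`, so the dimension rule for `X̄ ⊗ Z`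
bounds the mass arriving at `Z`. -/
lemma stepMass_le (K : Finset 𝕀.I) (X Z : 𝕀.I) : 𝕀.stepMass K X Z ≤ 𝕀.d Z ^ 2 := by
  have hN : ∑ Y ∈ K, (𝕀.N X Y Z : ℝ) * 𝕀.d Y ≤ 𝕀.d X * 𝕀.d Z := by
    simpa only [← 𝕀.frobenius_left, 𝕀.d_conj] using 𝕀.sum_N_mul_d_le (𝕀.conj X) Z K
  calc 𝕀.stepMass K X Z ≤ 𝕀.d Z / 𝕀.d X * (𝕀.d X * 𝕀.d Z) := by
        rw [stepMass_eq]
        exact mul_le_mul_of_nonneg_left hN (div_nonneg (𝕀.d_pos Z).le (𝕀.d_pos X).le)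
    _ = 𝕀.d Z ^ 2 := by
        field_simp [(𝕀.d_pos X).ne']

lemma stepMass_eq_zero {K : Finset 𝕀.I} {X Z : 𝕀.I} (hZ : Z ∉ 𝕀.mulFinset {X} K) :
    𝕀.stepMass K X Z = 0 := by
  rw [stepMass_eq, Finset.sum_eq_zero, mul_zero]
  intro Y hY
  have : 𝕀.N X Y Z = 0 := by
    by_contra h
    exact hZ (mem_mulFinset.2 ⟨X, Finset.mem_singleton_self X, Y, hY, h⟩)
  simp [this]

lemma sum_stepMass {K s : Finset 𝕀.I} {X : 𝕀.I} (hs : 𝕀.mulFinset {X} K ⊆ s) :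
    ∑ Z ∈ s, 𝕀.stepMass K X Z = ∑ Y ∈ K, 𝕀.d Y ^ 2 := by
  have hdX := (𝕀.d_pos X).ne'
  calc ∑ Z ∈ s, 𝕀.stepMass K X Z
      = ∑ Y ∈ K, 𝕀.d Y / 𝕀.d X * ∑ Z ∈ s, (𝕀.N X Y Z : ℝ) * 𝕀.d Z := by
        simp only [stepMass, d_sq_mul_p, Finset.mul_sum]
        rw [Finset.sum_comm]
        refine Finset.sum_congr rfl fun Y _ => Finset.sum_congr rfl fun Z _ => ?_
        ring
    _ = ∑ Y ∈ K, 𝕀.d Y / 𝕀.d X * (𝕀.d X * 𝕀.d Y) := by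
        refine Finset.sum_congr rfl fun Y hY => ?_
        rw [𝕀.sum_N_mul_d_eq X Y fun Z hZ =>
          hs (mem_mulFinset.2 ⟨X, Finset.mem_singleton_self X, Y, hY, hZ⟩)]
    _ = ∑ Y ∈ K, 𝕀.d Y ^ 2 := by
        refine Finset.sum_congr rfl fun Y _ => ?_
        field_simp

lemma support_abs_stepMass_sub_subset (K : Finset 𝕀.I) (X : 𝕀.I) :
    (Function.support fun Z =>
        |𝕀.stepMass K X Z - (K : Set 𝕀.I).indicator (fun Z' => 𝕀.d Z' ^ 2) Z|) ⊆
      ↑(K ∪ 𝕀.mulFinset {X} K) := by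
  intro Z hZ
  by_contra hZK
  simp only [Finset.coe_union, Set.mem_union, Finset.mem_coe, not_or] at hZK
  simp [stepMass_eq_zero hZK.2, Set.indicator_of_notMem (Finset.mem_coe.not.2 hZK.1)] at hZ

lemma finsum_abs_stepMass_sub_le (K : Finset 𝕀.I) (X : 𝕀.I) :
    ∑ᶠ Z, |𝕀.stepMass K X Z - (K : Set 𝕀.I).indicator (fun Z' => 𝕀.d Z' ^ 2) Z| ≤
      2 * ∑ Z ∈ 𝕀.mulFinset {X} K \ K, 𝕀.d Z ^ 2 := by
  have hKs : K ⊆ K ∪ 𝕀.mulFinset {X} K := Finset.subset_union_left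
  rw [finsum_eq_sum_of_support_subset _ (support_abs_stepMass_sub_subset K X),
    Finset.sum_abs_sub_indicator_eq hKs (fun Z _ => stepMass_nonneg K X Z)
      (fun Z _ => stepMass_le K X Z) (sum_stepMass Finset.subset_union_right),
    Finset.union_sdiff_left]
  gcongr with Z
  exact stepMass_le K X Z

end FusionDatum

theorem fusion_l1_almost_invariance_general (𝕀 : FusionDatum) (δ : ℝ)
    (F K : Set 𝕀.I) (hF : F.Finite) (hK : K.Finite)
    (hinv : 𝕀.IsInvariant F K δ) :
    (∀ X ∈ F, (Function.support fun Z =>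
        |(∑ᶠ Y ∈ K, 𝕀.d Y ^ 2 * 𝕀.p X Y Z)
          - Set.indicator K (fun Z' => 𝕀.d Z' ^ 2) Z|).Finite) ∧
    (∑ᶠ X ∈ F, 𝕀.d X ^ 2 *
        ∑ᶠ Z, |(∑ᶠ Y ∈ K, 𝕀.d Y ^ 2 * 𝕀.p X Y Z)
          - Set.indicator K (fun Z' => 𝕀.d Z' ^ 2) Z|)
      ≤ 2 * δ * 𝕀.sigma F * 𝕀.sigma K := by
  classical
  obtain ⟨F, rfl⟩ := hF.exists_finset_coe
  obtain ⟨K, rfl⟩ := hK.exists_finset_coe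
  have hstep : ∀ X Z, ∑ Y ∈ K, 𝕀.d Y ^ 2 * 𝕀.p X Y Z = 𝕀.stepMass K X Z := fun _ _ => rfl
  simp only [finsum_mem_coe_finset, hstep]
  refine ⟨fun X _ => (Finset.finite_toSet _).subset
    (FusionDatum.support_abs_stepMass_sub_subset K X), ?_⟩
  rw [FusionDatum.IsInvariant, ← FusionDatum.coe_mulFinset, ← Finset.coe_symmDiff,
    FusionDatum.sigma_coe, FusionDatum.sigma_coe] at hinv
  have hbound : ∀ X ∈ F,
      ∑ᶠ Z, |𝕀.stepMass K X Z - (K : Set 𝕀.I).indicator (fun Z' => 𝕀.d Z' ^ 2) Z|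
        ≤ 2 * (δ * 𝕀.sigma K) := fun X hX => by
    rw [FusionDatum.sigma_coe]
    refine (FusionDatum.finsum_abs_stepMass_sub_le K X).trans ?_
    gcongr
    exact (Finset.sum_le_sum_of_subset_of_nonneg
      (FusionDatum.mulFinset_singleton_sdiff_subset_symmDiff hX K)
      fun Z _ _ => sq_nonneg _).trans hinv
  calc _ ≤ ∑ X ∈ F, 𝕀.d X ^ 2 * (2 * (δ * 𝕀.sigma K)) :=
        Finset.sum_le_sum fun X hX => mul_le_mul_of_nonneg_left (hbound X hX) (sq_nonneg _)
    _ = 2 * δ * 𝕀.sigma F * 𝕀.sigma K := by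
        rw [← Finset.sum_mul, 𝕀.sigma_coe F]
        ring

/-- (ℓ¹-almost invariance of Følner sets under the fusion random
walk.) If `F̄ = F` and `K` is `(F,δ)`-invariant, then
`Σ_{X∈F} d(X)² Σ_Z |Σ_{Y∈K} d(Y)² p_X(Y,Z) − 1_K(Z) d(Z)²| ≤ 2δ |F|_σ |K|_σ`,
where for each `X` the sum over `Z` has only finitely many nonzero terms. -/
theorem fusion_l1_almost_invariance (𝕀 : FusionDatum) (δ : ℝ) (hδ : 0 < δ)
    (F K : Set 𝕀.I) (hF : F.Finite) (hK : K.Finite)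
    (hFconj : 𝕀.conjSet F = F) (hinv : 𝕀.IsInvariant F K δ) :
    (∀ X ∈ F, (Function.support fun Z =>
        |(∑ᶠ Y ∈ K, 𝕀.d Y ^ 2 * 𝕀.p X Y Z)
          - Set.indicator K (fun Z' => 𝕀.d Z' ^ 2) Z|).Finite) ∧
    (∑ᶠ X ∈ F, 𝕀.d X ^ 2 *
        ∑ᶠ Z, |(∑ᶠ Y ∈ K, 𝕀.d Y ^ 2 * 𝕀.p X Y Z)
          - Set.indicator K (fun Z' => 𝕀.d Z' ^ 2) Z|)
      ≤ 2 * δ * 𝕀.sigma F * 𝕀.sigma K :=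
  fusion_l1_almost_invariance_general 𝕀 δ F K hF hK hinv
end

section
/- (Graded Følner-type inequality.) Let (I_rs, 1_r, ‾, d, N) be a 2-graded fusion datum over Λ = {0,1}, let r, s ∈ Λ, let δ > 0, and let F ⊆ I_rs, K ⊆ I_s0 and L ⊆ I_r0 be finite subsets such that |(F·K) ∖ L|_σ ≤ δ · |L|_σ and |(F̄·L) ∖ K|_σ ≤ δ · |K|_σ. Then Σ_{(X,Y,Z)∈F×K×(I_r0∖L)} d(X)² d(Y)² p_X(Y,Z) ≤ δ · |F|_σ · |L|_σ and Σ_{(X,Y,Z)∈F×(I_s0∖K)×L} d(X)² d(Y)² p_X(Y,Z) ≤ δ · |F|_σ · |K|_σ, where both triple sums have only finitely many nonzero terms. -/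
open scoped BigOperators

/-- A 2-graded fusion datum over `Λ = {0,1}`, modelling the sets `Irr(C_rs)` of
isomorphism classes of simple 1-morphisms of a rigid C*-2-category. -/
structure GradedFusionDatum where
  /-- the countable index sets of simple 1-morphisms -/
  I : Fin 2 → Fin 2 → Type
  countable : ∀ r s, Countable (I r s)
  nonemptyI : ∀ r s, Nonempty (I r s)
  /-- the unit objects -/
  one : ∀ r, I r r
  /-- conjugation -/
  conj : ∀ {r s}, I r s → I s r
  /-- intrinsic dimension -/
  d : ∀ {r s}, I r s → ℝ
  /-- fusion multiplicities -/
  N : ∀ {r s t}, I r s → I s t → I r t → ℕ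
  conj_conj : ∀ {r s} (X : I r s), conj (conj X) = X
  conj_one : ∀ r, conj (one r) = one r
  one_le_d : ∀ {r s} (X : I r s), 1 ≤ d X
  d_conj : ∀ {r s} (X : I r s), d (conj X) = d X
  N_one_left_self : ∀ {r s} (Y : I r s), N (one r) Y Y = 1
  N_one_left_ne : ∀ {r s} (Y Z : I r s), Y ≠ Z → N (one r) Y Z = 0
  N_one_right_self : ∀ {r s} (Y : I r s), N Y (one s) Y = 1
  N_one_right_ne : ∀ {r s} (Y Z : I r s), Y ≠ Z → N Y (one s) Z = 0
  mul_support_finite : ∀ {r s t} (X : I r s) (Y : I s t), {Z : I r t | N X Y Z ≠ 0}.Finite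
  dim_rule : ∀ {r s t} (X : I r s) (Y : I s t),
    ∑ᶠ Z : I r t, (N X Y Z : ℝ) * d Z = d X * d Y
  frobenius_left : ∀ {r s t} (X : I r s) (Y : I s t) (Z : I r t), N X Y Z = N (conj X) Z Y
  frobenius_right : ∀ {r s t} (X : I r s) (Y : I s t) (Z : I r t), N X Y Z = N Z (conj Y) X
  assoc : ∀ {r s t u} (X : I r s) (Y : I s t) (V : I t u) (Z : I r u),
    ∑ᶠ W : I r t, N X Y W * N W V Z = ∑ᶠ U : I s u, N Y V U * N X U Z

namespace GradedFusionDatum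

variable (𝕀 : GradedFusionDatum)

/-- transition probability of the fusion random walk -/
noncomputable def p {r s t : Fin 2} (X : 𝕀.I r s) (Y : 𝕀.I s t) (Z : 𝕀.I r t) : ℝ :=
  𝕀.d Z * (𝕀.N X Y Z : ℝ) / (𝕀.d X * 𝕀.d Y)

/-- the weighted measure `|F|_σ = Σ_{X∈F} d(X)²` -/
noncomputable def sigma {r s : Fin 2} (S : Set (𝕀.I r s)) : ℝ := ∑ᶠ X ∈ S, 𝕀.d X ^ 2

/-- the product set `F·K` -/
def mulSet {r s t : Fin 2} (F : Set (𝕀.I r s)) (K : Set (𝕀.I s t)) : Set (𝕀.I r t) :=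
  {Z | ∃ X ∈ F, ∃ Y ∈ K, 𝕀.N X Y Z ≠ 0}

/-- `F̄ = {X̄ : X ∈ F}` -/
def conjSet {r s : Fin 2} (F : Set (𝕀.I r s)) : Set (𝕀.I s r) :=
  (fun X => 𝕀.conj X) '' F

/-- Amenability: every finite subset of `I 0 0` admits nonempty finite
`(F,δ)`-invariant sets. -/
def Amenable : Prop :=
  ∀ F : Set (𝕀.I 0 0), F.Finite → ∀ δ : ℝ, 0 < δ →
    ∃ K : Set (𝕀.I 0 0), K.Finite ∧ K.Nonempty ∧
      𝕀.sigma (symmDiff (𝕀.mulSet F K) K) ≤ δ * 𝕀.sigma K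

end GradedFusionDatum

/-!
The summand `d(X)² d(Y)² p_X(Y,Z)` is `d(X) d(Y) · N_{X,Y}^Z d(Z)`. In the first sum only
`Z ∈ (F·K) ∖ L` contribute, and by Frobenius reciprocity `N_{X,Y}^Z = N_{X̄,Z}^Y` the sum over
`Y` is a partial sum of the dimension rule for `(X̄, Z)`, hence at most `d(X) d(Z)`; the sum is
thus at most `|F|_σ |(F·K) ∖ L|_σ`. In the second sum Frobenius reciprocity confines `Y` to
`(F̄·L) ∖ K`, and the sum over `Z` is a partial sum of the dimension rule for `(X, Y)`.
-/

namespace GradedFusionDatum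

variable (𝕀 : GradedFusionDatum) {r s t : Fin 2}

lemma d_pos (X : 𝕀.I r s) : 0 < 𝕀.d X :=
  one_pos.trans_le (𝕀.one_le_d X)

lemma sigma_nonneg (S : Set (𝕀.I r s)) : 0 ≤ 𝕀.sigma S :=
  finsum_nonneg fun _ => finsum_nonneg fun _ => sq_nonneg _

lemma N_ne_zero_of_p_ne_zero {X : 𝕀.I r s} {Y : 𝕀.I s t} {Z : 𝕀.I r t}
    (h : 𝕀.p X Y Z ≠ 0) : 𝕀.N X Y Z ≠ 0 := by
  intro hN
  simp [p, hN] at h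

lemma sq_mul_sq_mul_p (X : 𝕀.I r s) (Y : 𝕀.I s t) (Z : 𝕀.I r t) :
    𝕀.d X ^ 2 * 𝕀.d Y ^ 2 * 𝕀.p X Y Z = 𝕀.d X * 𝕀.d Y * ((𝕀.N X Y Z : ℝ) * 𝕀.d Z) := by
  have := 𝕀.d_pos X
  have := 𝕀.d_pos Y
  unfold p
  field_simp

lemma mulSet_finite {F : Set (𝕀.I r s)} {K : Set (𝕀.I s t)} (hF : F.Finite) (hK : K.Finite) :
    (𝕀.mulSet F K).Finite :=
  (hF.biUnion fun X _ => hK.biUnion fun Y _ => 𝕀.mul_support_finite X Y).subset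
    fun _ ⟨_, hX, _, hY, h⟩ => Set.mem_biUnion hX (Set.mem_biUnion hY h)

lemma mem_mulSet_conjSet {F : Set (𝕀.I r s)} {L : Set (𝕀.I r t)} {X : 𝕀.I r s}
    {Y : 𝕀.I s t} {Z : 𝕀.I r t} (hX : X ∈ F) (hZ : Z ∈ L) (h : 𝕀.N X Y Z ≠ 0) :
    Y ∈ 𝕀.mulSet (𝕀.conjSet F) L :=
  ⟨𝕀.conj X, Set.mem_image_of_mem _ hX, Z, hZ, by rwa [← 𝕀.frobenius_left]⟩

lemma sum_N_mul_d_le (X : 𝕀.I r s) (Y : 𝕀.I s t) (S : Finset (𝕀.I r t)) :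
    ∑ Z ∈ S, (𝕀.N X Y Z : ℝ) * 𝕀.d Z ≤ 𝕀.d X * 𝕀.d Y := by
  classical
  have hsupp : (Function.support fun Z => (𝕀.N X Y Z : ℝ) * 𝕀.d Z).Finite :=
    (𝕀.mul_support_finite X Y).subset fun Z hZ hN => hZ (by simp [hN])
  rw [← 𝕀.dim_rule X Y, finsum_eq_sum_of_support_subset _ (s := S ∪ hsupp.toFinset)
    (by simp)]
  exact Finset.sum_le_sum_of_subset_of_nonneg Finset.subset_union_left
    fun Z _ _ => mul_nonneg (Nat.cast_nonneg _) (𝕀.d_pos Z).le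

lemma sum_N_mul_d_middle_le (X : 𝕀.I r s) (Z : 𝕀.I r t) (S : Finset (𝕀.I s t)) :
    ∑ Y ∈ S, (𝕀.N X Y Z : ℝ) * 𝕀.d Y ≤ 𝕀.d X * 𝕀.d Z := by
  simpa only [← 𝕀.frobenius_left, 𝕀.d_conj] using 𝕀.sum_N_mul_d_le (𝕀.conj X) Z S

lemma sum_sum_sum_le_of_right (F : Finset (𝕀.I r s)) (K : Finset (𝕀.I s t))
    (T : Finset (𝕀.I r t)) :
    ∑ X ∈ F, ∑ Y ∈ K, ∑ Z ∈ T, 𝕀.d X ^ 2 * 𝕀.d Y ^ 2 * 𝕀.p X Y Z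
      ≤ (∑ X ∈ F, 𝕀.d X ^ 2) * ∑ Z ∈ T, 𝕀.d Z ^ 2 := by
  rw [Finset.sum_mul_sum]
  refine Finset.sum_le_sum fun X _ => ?_
  rw [Finset.sum_comm]
  refine Finset.sum_le_sum fun Z _ => ?_
  have := 𝕀.d_pos X
  have := 𝕀.d_pos Z
  calc ∑ Y ∈ K, 𝕀.d X ^ 2 * 𝕀.d Y ^ 2 * 𝕀.p X Y Z
      = 𝕀.d X * 𝕀.d Z * ∑ Y ∈ K, (𝕀.N X Y Z : ℝ) * 𝕀.d Y := by
        simp only [sq_mul_sq_mul_p, Finset.mul_sum]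
        exact Finset.sum_congr rfl fun Y _ => by ring
    _ ≤ 𝕀.d X * 𝕀.d Z * (𝕀.d X * 𝕀.d Z) := by gcongr; exact 𝕀.sum_N_mul_d_middle_le X Z K
    _ = 𝕀.d X ^ 2 * 𝕀.d Z ^ 2 := by ring

lemma sum_sum_sum_le_of_middle (F : Finset (𝕀.I r s)) (T : Finset (𝕀.I s t))
    (L : Finset (𝕀.I r t)) :
    ∑ X ∈ F, ∑ Y ∈ T, ∑ Z ∈ L, 𝕀.d X ^ 2 * 𝕀.d Y ^ 2 * 𝕀.p X Y Z
      ≤ (∑ X ∈ F, 𝕀.d X ^ 2) * ∑ Y ∈ T, 𝕀.d Y ^ 2 := by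
  rw [Finset.sum_mul_sum]
  refine Finset.sum_le_sum fun X _ => Finset.sum_le_sum fun Y _ => ?_
  have := 𝕀.d_pos X
  have := 𝕀.d_pos Y
  calc ∑ Z ∈ L, 𝕀.d X ^ 2 * 𝕀.d Y ^ 2 * 𝕀.p X Y Z
      = 𝕀.d X * 𝕀.d Y * ∑ Z ∈ L, (𝕀.N X Y Z : ℝ) * 𝕀.d Z := by
        simp only [sq_mul_sq_mul_p, Finset.mul_sum]
    _ ≤ 𝕀.d X * 𝕀.d Y * (𝕀.d X * 𝕀.d Y) := by gcongr; exact 𝕀.sum_N_mul_d_le X Y L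
    _ = 𝕀.d X ^ 2 * 𝕀.d Y ^ 2 := by ring

lemma finsum_finsum_finsum_compl_right_le {F : Set (𝕀.I r s)} {K : Set (𝕀.I s t)}
    (L : Set (𝕀.I r t)) (hF : F.Finite) (hK : K.Finite) :
    ∑ᶠ X ∈ F, ∑ᶠ Y ∈ K, ∑ᶠ Z ∈ Lᶜ, 𝕀.d X ^ 2 * 𝕀.d Y ^ 2 * 𝕀.p X Y Z
      ≤ 𝕀.sigma F * 𝕀.sigma (𝕀.mulSet F K \ L) := by
  have hT := (𝕀.mulSet_finite hF hK).sdiff (t := L)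
  rw [sigma, sigma, finsum_mem_eq_finite_toFinset_sum _ hF,
    finsum_mem_eq_finite_toFinset_sum _ hT, finsum_mem_eq_finite_toFinset_sum _ hF]
  calc _ = ∑ X ∈ hF.toFinset, ∑ Y ∈ hK.toFinset, ∑ Z ∈ hT.toFinset,
        𝕀.d X ^ 2 * 𝕀.d Y ^ 2 * 𝕀.p X Y Z := by
        refine Finset.sum_congr rfl fun X hX => ?_
        rw [finsum_mem_eq_finite_toFinset_sum _ hK]
        refine Finset.sum_congr rfl fun Y hY => finsum_mem_eq_sum_of_subset _ ?_ ?_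
        · rintro Z ⟨hZL, hZ⟩
          rw [Set.Finite.mem_toFinset] at hX hY
          rw [Set.Finite.coe_toFinset]
          exact ⟨⟨X, hX, Y, hY, 𝕀.N_ne_zero_of_p_ne_zero (right_ne_zero_of_mul hZ)⟩, hZL⟩
        · rw [Set.Finite.coe_toFinset]
          exact Set.sdiff_subset_compl _ _
    _ ≤ _ := 𝕀.sum_sum_sum_le_of_right _ _ _

lemma finsum_finsum_finsum_compl_middle_le {F : Set (𝕀.I r s)} (K : Set (𝕀.I s t))
    {L : Set (𝕀.I r t)} (hF : F.Finite) (hL : L.Finite) :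
    ∑ᶠ X ∈ F, ∑ᶠ Y ∈ Kᶜ, ∑ᶠ Z ∈ L, 𝕀.d X ^ 2 * 𝕀.d Y ^ 2 * 𝕀.p X Y Z
      ≤ 𝕀.sigma F * 𝕀.sigma (𝕀.mulSet (𝕀.conjSet F) L \ K) := by
  have hF' : (𝕀.conjSet F).Finite := hF.image _
  have hT := (𝕀.mulSet_finite hF' hL).sdiff (t := K)
  rw [sigma, sigma, finsum_mem_eq_finite_toFinset_sum _ hF,
    finsum_mem_eq_finite_toFinset_sum _ hT, finsum_mem_eq_finite_toFinset_sum _ hF]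
  calc _ = ∑ X ∈ hF.toFinset, ∑ Y ∈ hT.toFinset, ∑ Z ∈ hL.toFinset,
        𝕀.d X ^ 2 * 𝕀.d Y ^ 2 * 𝕀.p X Y Z := by
        refine Finset.sum_congr rfl fun X hX => ?_
        simp_rw [finsum_mem_eq_finite_toFinset_sum _ hL]
        refine finsum_mem_eq_sum_of_subset _ ?_ ?_
        · rintro Y ⟨hYK, hY⟩
          obtain ⟨Z, hZ, hw⟩ := Finset.exists_ne_zero_of_sum_ne_zero hY
          rw [Set.Finite.mem_toFinset] at hX hZ
          rw [Set.Finite.coe_toFinset]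
          exact ⟨𝕀.mem_mulSet_conjSet hX hZ
            (𝕀.N_ne_zero_of_p_ne_zero (right_ne_zero_of_mul hw)), hYK⟩
        · rw [Set.Finite.coe_toFinset]
          exact Set.sdiff_subset_compl _ _
    _ ≤ _ := 𝕀.sum_sum_sum_le_of_middle _ _ _

end GradedFusionDatum

theorem graded_folner_inequality_general (𝕀 : GradedFusionDatum) (r s : Fin 2)
    (δ : ℝ)
    (F : Set (𝕀.I r s)) (K : Set (𝕀.I s 0)) (L : Set (𝕀.I r 0))
    (hF : F.Finite) (hK : K.Finite) (hL : L.Finite)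
    (h1 : 𝕀.sigma (𝕀.mulSet F K \ L) ≤ δ * 𝕀.sigma L)
    (h2 : 𝕀.sigma (𝕀.mulSet (𝕀.conjSet F) L \ K) ≤ δ * 𝕀.sigma K) :
    ({W : 𝕀.I r s × 𝕀.I s 0 × 𝕀.I r 0 |
        W.1 ∈ F ∧ W.2.1 ∈ K ∧ W.2.2 ∉ L ∧ 𝕀.p W.1 W.2.1 W.2.2 ≠ 0}.Finite ∧
     {W : 𝕀.I r s × 𝕀.I s 0 × 𝕀.I r 0 |
        W.1 ∈ F ∧ W.2.1 ∉ K ∧ W.2.2 ∈ L ∧ 𝕀.p W.1 W.2.1 W.2.2 ≠ 0}.Finite) ∧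
    (∑ᶠ X ∈ F, ∑ᶠ Y ∈ K, ∑ᶠ Z ∈ Lᶜ, 𝕀.d X ^ 2 * 𝕀.d Y ^ 2 * 𝕀.p X Y Z)
      ≤ δ * 𝕀.sigma F * 𝕀.sigma L ∧
    (∑ᶠ X ∈ F, ∑ᶠ Y ∈ Kᶜ, ∑ᶠ Z ∈ L, 𝕀.d X ^ 2 * 𝕀.d Y ^ 2 * 𝕀.p X Y Z)
      ≤ δ * 𝕀.sigma F * 𝕀.sigma K := by
  have hFK := 𝕀.mulSet_finite hF hK
  have hFL := 𝕀.mulSet_finite (F := 𝕀.conjSet F) (hF.image _) hL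
  refine ⟨⟨(hF.prod (hK.prod hFK)).subset ?_, (hF.prod (hFL.prod hL)).subset ?_⟩, ?_, ?_⟩
  · rintro ⟨X, Y, Z⟩ ⟨hX, hY, -, hp⟩
    exact ⟨hX, hY, X, hX, Y, hY, 𝕀.N_ne_zero_of_p_ne_zero hp⟩
  · rintro ⟨X, Y, Z⟩ ⟨hX, -, hZ, hp⟩
    exact ⟨hX, 𝕀.mem_mulSet_conjSet hX hZ (𝕀.N_ne_zero_of_p_ne_zero hp), hZ⟩
  · calc _ ≤ 𝕀.sigma F * 𝕀.sigma (𝕀.mulSet F K \ L) :=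
          𝕀.finsum_finsum_finsum_compl_right_le L hF hK
      _ ≤ 𝕀.sigma F * (δ * 𝕀.sigma L) :=
          mul_le_mul_of_nonneg_left h1 (𝕀.sigma_nonneg F)
      _ = δ * 𝕀.sigma F * 𝕀.sigma L := by ring
  · calc _ ≤ 𝕀.sigma F * 𝕀.sigma (𝕀.mulSet (𝕀.conjSet F) L \ K) :=
          𝕀.finsum_finsum_finsum_compl_middle_le K hF hL
      _ ≤ 𝕀.sigma F * (δ * 𝕀.sigma K) :=
          mul_le_mul_of_nonneg_left h2 (𝕀.sigma_nonneg F)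
      _ = δ * 𝕀.sigma F * 𝕀.sigma K := by ring

/-- (Graded Følner-type inequality.) If finite sets `F ⊆ I_rs`,
`K ⊆ I_s0`, `L ⊆ I_r0` satisfy `|(F·K) ∖ L|_σ ≤ δ|L|_σ` and
`|(F̄·L) ∖ K|_σ ≤ δ|K|_σ`, then
`Σ_{F×K×Lᶜ} d(X)²d(Y)² p_X(Y,Z) ≤ δ|F|_σ|L|_σ` and
`Σ_{F×Kᶜ×L} d(X)²d(Y)² p_X(Y,Z) ≤ δ|F|_σ|K|_σ`; both triple sums have only
finitely many nonzero terms. -/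
theorem graded_folner_inequality (𝕀 : GradedFusionDatum) (r s : Fin 2)
    (δ : ℝ) (hδ : 0 < δ)
    (F : Set (𝕀.I r s)) (K : Set (𝕀.I s 0)) (L : Set (𝕀.I r 0))
    (hF : F.Finite) (hK : K.Finite) (hL : L.Finite)
    (h1 : 𝕀.sigma (𝕀.mulSet F K \ L) ≤ δ * 𝕀.sigma L)
    (h2 : 𝕀.sigma (𝕀.mulSet (𝕀.conjSet F) L \ K) ≤ δ * 𝕀.sigma K) :
    ({W : 𝕀.I r s × 𝕀.I s 0 × 𝕀.I r 0 |
        W.1 ∈ F ∧ W.2.1 ∈ K ∧ W.2.2 ∉ L ∧ 𝕀.p W.1 W.2.1 W.2.2 ≠ 0}.Finite ∧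
     {W : 𝕀.I r s × 𝕀.I s 0 × 𝕀.I r 0 |
        W.1 ∈ F ∧ W.2.1 ∉ K ∧ W.2.2 ∈ L ∧ 𝕀.p W.1 W.2.1 W.2.2 ≠ 0}.Finite) ∧
    (∑ᶠ X ∈ F, ∑ᶠ Y ∈ K, ∑ᶠ Z ∈ Lᶜ, 𝕀.d X ^ 2 * 𝕀.d Y ^ 2 * 𝕀.p X Y Z)
      ≤ δ * 𝕀.sigma F * 𝕀.sigma L ∧
    (∑ᶠ X ∈ F, ∑ᶠ Y ∈ Kᶜ, ∑ᶠ Z ∈ L, 𝕀.d X ^ 2 * 𝕀.d Y ^ 2 * 𝕀.p X Y Z)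
      ≤ δ * 𝕀.sigma F * 𝕀.sigma K :=
  graded_folner_inequality_general 𝕀 r s δ F K L hF hK hL h1 h2
end
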